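/- arXiv:2009.03270 — 2 statements merged into one kernel-verified Lean document; each statement's English description precedes it below -/
import Mathlib

section
/- Let (U,V) be a cotorsion pair in an abelian category A, and let 0 → M′ → M → M″ → 0 be a degreewise short exact sequence of complexes with every term of every complex in V. If M′ and M″ are acyclic with all cycle objects in V, then M is acyclic with all cycle objects in V. -/
open CategoryTheory Category Limits

universe v u

/-- `Ext¹(X,Y) = 0`, encoded as: every short exact sequence `0 → Y → E → X → 0` splits. -/
def Ext1Vanishes {A : Type u} [Category.{v} A] [Abelian A] (X Y : A) : Prop :=
  ∀ (E : A) (f : Y ⟶ E) (g : E ⟶ X) (w : f ≫ g = 0),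
    (ShortComplex.mk f g w).ShortExact → ∃ s : X ⟶ E, s ≫ g = 𝟙 X

/-- `(U,V)` is a cotorsion pair in the abelian category `A`. -/
def IsCotorsionPair {A : Type u} [Category.{v} A] [Abelian A] (U V : Set A) : Prop :=
  (∀ X, X ∈ U ↔ ∀ Y ∈ V, Ext1Vanishes X Y) ∧
  (∀ Y, Y ∈ V ↔ ∀ X ∈ U, Ext1Vanishes X Y)


/-- A chain complex is acyclic if all its homology vanishes. -/
def IsAcyclicComplex {A : Type u} [Category.{v} A] [Abelian A]
    (K : ChainComplex A ℤ) : Prop :=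
  ∀ n : ℤ, K.ExactAt n

/-! The acyclicity of `M` comes from the long exact homology sequence. Since `M''` is exact,
`M''_{n+1} ⟶ Z_n(M'')` is epi, hence so is `Z_n(M) ⟶ Z_n(M'')`, and
`0 ⟶ Z_n(M') ⟶ Z_n(M) ⟶ Z_n(M'') ⟶ 0` is short exact. It remains to see that
`V = {Y | Ext¹(X, Y) = 0 for all X ∈ U}` is closed under extensions. Given
`0 ⟶ Y' ⟶ Y ⟶ Y'' ⟶ 0` and an extension `0 ⟶ Y ⟶ E ⟶ X ⟶ 0`, the extension
`0 ⟶ Y'' ⟶ E/Y' ⟶ X ⟶ 0` has a section `s`, and pulling back `E ⟶ E/Y'` along `s` gives an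
extension of `X` by `Y'`, whose section composed with the projection to `E` splits `E ⟶ X`. -/

namespace CategoryTheory.ShortComplex

variable {A : Type u} [Category.{v} A] [Abelian A]

lemma ShortExact.shortExact_pullback {S : ShortComplex A} (hS : S.ShortExact) {X : A}
    (s : X ⟶ S.X₃) :
    (ShortComplex.mk (pullback.lift S.f 0 (by rw [S.zero, zero_comp])) (pullback.snd S.g s)
      (pullback.lift_snd _ _ _)).ShortExact := by
  have := hS.mono_f
  have := hS.epi_g
  refine .mk' ?_ (mono_of_mono_fac (pullback.lift_fst _ _ _)) inferInstance
  rw [exact_iff_exact_up_to_refinements]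
  intro T x (hx : x ≫ pullback.snd S.g s = 0)
  have hx₁ : (x ≫ pullback.fst S.g s) ≫ S.g = 0 := by
    rw [Category.assoc, pullback.condition, reassoc_of% hx, zero_comp]
  refine ⟨T, 𝟙 T, inferInstance, hS.exact.lift _ hx₁, ?_⟩
  apply pullback.hom_ext
  · simp only [Category.id_comp, Category.assoc, pullback.lift_fst, hS.exact.lift_f]
  · simp only [Category.id_comp, Category.assoc, pullback.lift_snd, comp_zero, hx]

lemma ShortExact.shortExact_cokernel_comp {Y' Y Y'' E X : A} {i : Y' ⟶ Y} {p : Y ⟶ Y''}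
    {wip : i ≫ p = 0} (hip : (ShortComplex.mk i p wip).ShortExact) {f : Y ⟶ E} {g : E ⟶ X}
    {wfg : f ≫ g = 0} (hfg : (ShortComplex.mk f g wfg).ShortExact)
    (j : Y'' ⟶ cokernel (i ≫ f)) (hj : p ≫ j = f ≫ cokernel.π (i ≫ f)) :
    (ShortComplex.mk j (cokernel.desc (i ≫ f) g (by rw [Category.assoc, wfg, comp_zero]))
      (by have := hip.epi_g
          rw [← cancel_epi p, reassoc_of% hj, cokernel.π_desc, wfg, comp_zero])).ShortExact := by
  have := hip.mono_f
  have := hip.epi_g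
  have := hfg.mono_f
  have := hfg.epi_g
  have hifg : (i ≫ f) ≫ g = 0 := by rw [Category.assoc, wfg, comp_zero]
  have hπ : (ShortComplex.mk _ _ (cokernel.condition (i ≫ f))).Exact :=
    exact_of_g_is_cokernel _ (cokernelIsCokernel _)
  have hj_mono : Mono j := by
    rw [Preadditive.mono_iff_cancel_zero]
    intro T x hx
    obtain ⟨T₁, π₁, _, y, hy⟩ := surjective_up_to_refinements_of_epi p x
    have hyf : (y ≫ f) ≫ cokernel.π (i ≫ f) = 0 := by
      rw [Category.assoc, ← hj, ← reassoc_of% hy, hx, comp_zero]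
    have hy' : y = hπ.lift _ hyf ≫ i := by
      rw [← cancel_mono f, Category.assoc]
      exact (hπ.lift_f _ hyf).symm
    rw [← cancel_epi π₁, hy, hy', Category.assoc, wip, comp_zero, comp_zero]
  refine .mk' ?_ hj_mono (epi_of_epi_fac (cokernel.π_desc _ _ _))
  rw [exact_iff_exact_up_to_refinements]
  intro T x (hx : x ≫ cokernel.desc _ g _ = 0)
  obtain ⟨T₁, π₁, _, e, he⟩ := surjective_up_to_refinements_of_epi (cokernel.π (i ≫ f)) x
  have heg : e ≫ g = 0 := by
    rw [← cokernel.π_desc (i ≫ f) g hifg, ← reassoc_of% he, hx, comp_zero]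
  refine ⟨T₁, π₁, inferInstance, hfg.exact.lift e heg ≫ p, ?_⟩
  change _ = (_ ≫ p) ≫ j
  rw [he, Category.assoc, hj, ← Category.assoc, hfg.exact.lift_f]

end CategoryTheory.ShortComplex

lemma ext1Vanishes_of_shortExact {A : Type u} [Category.{v} A] [Abelian A]
    {X Y' Y Y'' : A} {i : Y' ⟶ Y} {p : Y ⟶ Y''} {wip : i ≫ p = 0}
    (hip : (ShortComplex.mk i p wip).ShortExact)
    (h' : Ext1Vanishes X Y') (h'' : Ext1Vanishes X Y'') : Ext1Vanishes X Y := by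
  intro E f g wfg hfg
  have := hip.mono_f
  have := hfg.mono_f
  obtain ⟨j, hj⟩ := CokernelCofork.IsColimit.desc' hip.gIsCokernel (f ≫ cokernel.π (i ≫ f))
    (by rw [← Category.assoc, cokernel.condition])
  obtain ⟨s, hs⟩ := h'' _ _ _ _ (hip.shortExact_cokernel_comp hfg j hj)
  have hquot : (ShortComplex.mk _ _ (cokernel.condition (i ≫ f))).ShortExact :=
    .mk' (ShortComplex.exact_of_g_is_cokernel _ (cokernelIsCokernel _)) inferInstance inferInstance
  obtain ⟨t, ht⟩ := h' _ _ _ _ (hquot.shortExact_pullback s)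
  refine ⟨t ≫ pullback.fst _ s, ?_⟩
  rw [Category.assoc, ← cokernel.π_desc (i ≫ f) g (by rw [Category.assoc, wfg, comp_zero]),
    pullback.condition_assoc, hs, Category.comp_id, ht]

namespace HomologicalComplex

variable {A : Type u} [Category.{v} A] [Abelian A] {ι : Type*} {c : ComplexShape ι}

lemma toCycles_comp_cyclesMap {K L : HomologicalComplex A c} (φ : K ⟶ L) (i j : ι) :
    K.toCycles i j ≫ cyclesMap φ j = φ.f i ≫ L.toCycles i j := by
  simp [← cancel_mono (L.iCycles j)]

lemma epi_cyclesMap_of_exactAt {K L : HomologicalComplex A c} (φ : K ⟶ L) (i : ι)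
    [Epi (φ.f (c.prev i))] (hL : L.ExactAt i) : Epi (cyclesMap φ i) := by
  have : Epi (L.toCycles (c.prev i) i) := hL.epi_toCycles
  exact epi_of_epi_fac (toCycles_comp_cyclesMap φ (c.prev i) i)

lemma shortExact_cycles {S : ShortComplex (HomologicalComplex A c)} (hS : S.ShortExact) (i : ι)
    (h₃ : S.X₃.ExactAt i) :
    (ShortComplex.mk (cyclesMap S.f i) (cyclesMap S.g i)
      (by rw [← cyclesMap_comp, S.zero, cyclesMap_zero])).ShortExact := by
  have := hS.mono_f
  have := hS.epi_g
  exact .mk' (cycles_left_exact S hS.exact i) inferInstance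
    (epi_cyclesMap_of_exactAt S.g i h₃)

end HomologicalComplex

lemma IsCotorsionPair.mem_right_of_shortExact {A : Type u} [Category.{v} A] [Abelian A]
    {U V : Set A} (h : IsCotorsionPair U V) {Y' Y Y'' : A} {i : Y' ⟶ Y} {p : Y ⟶ Y''}
    {wip : i ≫ p = 0} (hip : (ShortComplex.mk i p wip).ShortExact)
    (h' : Y' ∈ V) (h'' : Y'' ∈ V) : Y ∈ V :=
  (h.2 Y).2 fun X hX ↦ ext1Vanishes_of_shortExact hip ((h.2 _).1 h' X hX) ((h.2 _).1 h'' X hX)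

theorem stmt7_general {A : Type u} [Category.{v} A] [Abelian A] (U V : Set A)
    (h : IsCotorsionPair U V)
    (M' M M'' : ChainComplex A ℤ) (f : M' ⟶ M) (g : M ⟶ M'')
    (w : ∀ n, f.f n ≫ g.f n = 0)
    (hses : ∀ n, (ShortComplex.mk (f.f n) (g.f n) (w n)).ShortExact)
    (hac' : IsAcyclicComplex M') (hcyc' : ∀ n, M'.cycles n ∈ V)
    (hac'' : IsAcyclicComplex M'') (hcyc'' : ∀ n, M''.cycles n ∈ V) :
    IsAcyclicComplex M ∧ ∀ n, M.cycles n ∈ V := by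
  have hfg : f ≫ g = 0 := by ext n; exact w n
  have hS : (ShortComplex.mk f g hfg).ShortExact :=
    HomologicalComplex.shortExact_of_degreewise_shortExact _ hses
  exact ⟨hS.acyclic_X₂ hac' hac'', fun n ↦
    h.mem_right_of_shortExact (HomologicalComplex.shortExact_cycles hS n (hac'' n))
      (hcyc' n) (hcyc'' n)⟩

/-- For a cotorsion pair `(U,V)` and a degreewise short exact sequence of complexes
`0 → M′ → M → M″ → 0` with all terms of all three complexes in `V`: if `M′` and `M″` are
acyclic with all cycle objects in `V`, then so is `M`. -/
theorem stmt7 {A : Type u} [Category.{v} A] [Abelian A] (U V : Set A)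
    (h : IsCotorsionPair U V)
    (M' M M'' : ChainComplex A ℤ) (f : M' ⟶ M) (g : M ⟶ M'')
    (w : ∀ n, f.f n ≫ g.f n = 0)
    (hses : ∀ n, (ShortComplex.mk (f.f n) (g.f n) (w n)).ShortExact)
    (hM' : ∀ n, M'.X n ∈ V) (hM : ∀ n, M.X n ∈ V) (hM'' : ∀ n, M''.X n ∈ V)
    (hac' : IsAcyclicComplex M') (hcyc' : ∀ n, M'.cycles n ∈ V)
    (hac'' : IsAcyclicComplex M'') (hcyc'' : ∀ n, M''.cycles n ∈ V) :
    IsAcyclicComplex M ∧ ∀ n, M.cycles n ∈ V :=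
  stmt7_general U V h M' M M'' f g w hses hac' hcyc' hac'' hcyc''
end

section
/- Let A be an abelian category and E a full additive subcategory closed under extensions and direct summands, with enough projectives (every object of E is an admissible quotient of a projective object of E). If every object of E admits a finite resolution by projective objects of E, then every bounded-below complex of projective objects of E that is eventually E-acyclic is homotopy equivalent to a bounded complex of projective objects of E. -/
/-!
Write `Z_n` for the cycles of `X`. For `n ≥ N` the sequences `0 → Z_{n+1} → X_{n+1} → Z_n → 0`
are short exact in `E` with projective middle term, so by Schanuel's lemma each step up shortens
a finite resolution of `Z_N` by one, stably (up to a projective summand); after finitely many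
steps some `Z_m` is projective in `E`. From then on all these sequences split, and the splittings
give a null-homotopic map `dh + hd` such that `e = 𝟙 - (dh + hd)` is an idempotent chain map, the
identity up to degree `m` and zero above `m + 1`. Complexes over an abelian category are
idempotent complete, so `e` splits through a complex `Q` whose terms are retracts of those of
`X`; then `Q` is bounded and homotopy equivalent to `X`.
-/

open CategoryTheory Category Limits

universe v u

/-- `P` is a projective object of the exact category `E` (exact structure inherited
from the ambient abelian category). -/
def ProjectiveInSub {A : Type u} [Category.{v} A] [Abelian A] (E : Set A) (P : A) : Prop :=
  P ∈ E ∧ ∀ (K X Y : A) (f : K ⟶ X) (g : X ⟶ Y) (w : f ≫ g = 0),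
    K ∈ E → X ∈ E → Y ∈ E → (ShortComplex.mk f g w).ShortExact →
    ∀ h : P ⟶ Y, ∃ l : P ⟶ X, l ≫ g = h

/-- `M` has a resolution of length `n` in the exact category `E` by projective objects
of `E` (all syzygies lie in `E`, so the resolution is admissible). -/
def FinProjResLen {A : Type u} [Category.{v} A] [Abelian A] (E : Set A) : ℕ → A → Prop
  | 0, M => ProjectiveInSub E M
  | n + 1, M => ∃ (P K : A) (f : K ⟶ P) (g : P ⟶ M) (w : f ≫ g = 0),
      ProjectiveInSub E P ∧ K ∈ E ∧ (ShortComplex.mk f g w).ShortExact ∧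
      FinProjResLen E n K

lemma CategoryTheory.Retract.isZero_of_r_i_eq_zero {C : Type*} [Category C]
    [HasZeroMorphisms C] {X Y : C} (h : Retract X Y) (hri : h.r ≫ h.i = 0) : IsZero X := by
  rw [IsZero.iff_id_eq_zero]
  simpa using h.i ≫= hri =≫ h.r

section ExactSubcategory

variable {A : Type u} [Category.{v} A] [Abelian A]

def IsClosedUnderBiprods (E : Set A) : Prop := ∀ X Y : A, X ∈ E → Y ∈ E → (X ⊞ Y) ∈ E

def IsClosedUnderExtensions (E : Set A) : Prop :=
  ∀ ⦃S : ShortComplex A⦄, S.ShortExact → S.X₁ ∈ E → S.X₃ ∈ E → S.X₂ ∈ E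

def IsClosedUnderRetracts (E : Set A) : Prop := ∀ ⦃X Y : A⦄, Retract X Y → Y ∈ E → X ∈ E

variable {E : Set A}

lemma ProjectiveInSub.of_retract (hE : IsClosedUnderRetracts E) {P P' : A} (h : Retract P P')
    (hP' : ProjectiveInSub E P') : ProjectiveInSub E P := by
  refine ⟨hE h hP'.1, fun K X Y f g w hK hX hY hS φ => ?_⟩
  obtain ⟨l, hl⟩ := hP'.2 K X Y f g w hK hX hY hS (h.r ≫ φ)
  exact ⟨h.i ≫ l, by rw [assoc, hl, h.retract_assoc]⟩

lemma ProjectiveInSub.of_iso (hE : IsClosedUnderRetracts E) {P P' : A} (e : P ≅ P')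
    (hP : ProjectiveInSub E P) : ProjectiveInSub E P' :=
  hP.of_retract hE e.symm.retract

lemma ProjectiveInSub.biprod (hE : IsClosedUnderBiprods E) {P P' : A}
    (hP : ProjectiveInSub E P) (hP' : ProjectiveInSub E P') : ProjectiveInSub E (P ⊞ P') := by
  refine ⟨hE P P' hP.1 hP'.1, fun K X Y f g w hK hX hY hS φ => ?_⟩
  obtain ⟨l, hl⟩ := hP.2 K X Y f g w hK hX hY hS (biprod.inl ≫ φ)
  obtain ⟨l', hl'⟩ := hP'.2 K X Y f g w hK hX hY hS (biprod.inr ≫ φ)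
  exact ⟨biprod.desc l l', by ext <;> simp [hl, hl']⟩

namespace CategoryTheory.ShortComplex.ShortExact

lemma nonempty_splitting_of_projectiveInSub {S : ShortComplex A} (hS : S.ShortExact)
    (h₁ : S.X₁ ∈ E) (h₂ : S.X₂ ∈ E) (h₃ : ProjectiveInSub E S.X₃) : Nonempty S.Splitting := by
  obtain ⟨σ, hσ⟩ := h₃.2 _ _ _ S.f S.g S.zero h₁ h₂ h₃.1 hS (𝟙 _)
  exact ⟨.ofExactOfSection S hS.exact σ hσ hS.mono_f⟩

lemma projectiveInSub_X₁ (hE : IsClosedUnderRetracts E) {S : ShortComplex A} (hS : S.ShortExact)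
    (h₁ : S.X₁ ∈ E) (h₂ : ProjectiveInSub E S.X₂) (h₃ : ProjectiveInSub E S.X₃) :
    ProjectiveInSub E S.X₁ := by
  obtain ⟨σ⟩ := hS.nonempty_splitting_of_projectiveInSub h₁ h₂.1 h₃
  exact h₂.of_retract hE ⟨S.f, σ.r, σ.f_r⟩

lemma biprod_right {K P M : A} {f : K ⟶ P} {g : P ⟶ M} {w : f ≫ g = 0}
    (hS : (ShortComplex.mk f g w).ShortExact) (Q : A) :
    (ShortComplex.mk (f ≫ biprod.inl) (biprod.map g (𝟙 Q))
      (by simp [reassoc_of% w])).ShortExact := by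
  have := hS.mono_f
  have := hS.epi_g
  refine .mk' ?_ inferInstance inferInstance
  rw [ShortComplex.exact_iff_exact_up_to_refinements]
  intro T x hx
  have hsnd : x ≫ biprod.snd = 0 := by simpa using hx =≫ biprod.snd
  have hfst : (x ≫ biprod.fst) ≫ g = 0 := by simpa using hx =≫ biprod.fst
  refine ⟨T, 𝟙 T, inferInstance, hS.exact.lift _ hfst, ?_⟩
  ext
  · simp [hS.exact.lift_f]
  · simp [hsnd]

lemma pullback {K P M : A} {f : K ⟶ P} {g : P ⟶ M} {w : f ≫ g = 0}
    (hS : (ShortComplex.mk f g w).ShortExact) {P' : A} (φ : P' ⟶ M) :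
    (ShortComplex.mk (pullback.lift f 0 (by simp [w])) (Limits.pullback.snd g φ)
      (pullback.lift_snd _ _ _)).ShortExact := by
  have := hS.mono_f
  have := hS.epi_g
  have : Mono (pullback.lift f 0 (by simp [w]) : K ⟶ Limits.pullback g φ) :=
    mono_of_mono_fac (pullback.lift_fst _ _ _)
  refine .mk' ?_ inferInstance inferInstance
  rw [ShortComplex.exact_iff_exact_up_to_refinements]
  intro T x hx
  have hfst : (x ≫ pullback.fst g φ) ≫ g = 0 := by
    simpa [pullback.condition] using hx =≫ φ
  refine ⟨T, 𝟙 T, inferInstance, hS.exact.lift _ hfst, ?_⟩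
  ext
  · rw [id_comp, assoc, pullback.lift_fst]
    exact (hS.exact.lift_f _ _).symm
  · rw [id_comp, assoc, pullback.lift_snd, comp_zero]
    exact hx

end CategoryTheory.ShortComplex.ShortExact

lemma pullback_iso_biprod_of_projectiveInSub (hE : IsClosedUnderExtensions E) {K P M P' : A}
    {f : K ⟶ P} {g : P ⟶ M} {w : f ≫ g = 0} (hS : (ShortComplex.mk f g w).ShortExact)
    (hK : K ∈ E) (φ : P' ⟶ M) (hP' : ProjectiveInSub E P') :
    Nonempty (pullback g φ ≅ K ⊞ P') := by
  have hS' := hS.pullback φ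
  obtain ⟨σ⟩ := hS'.nonempty_splitting_of_projectiveInSub hK (hE hS' hK hP'.1) hP'
  exact ⟨σ.isoBinaryBiproduct⟩

theorem schanuel (hE : IsClosedUnderExtensions E) {K P K' P' M : A}
    {f : K ⟶ P} {g : P ⟶ M} {w : f ≫ g = 0} (hS : (ShortComplex.mk f g w).ShortExact)
    {f' : K' ⟶ P'} {g' : P' ⟶ M} {w' : f' ≫ g' = 0}
    (hS' : (ShortComplex.mk f' g' w').ShortExact) (hK : K ∈ E) (hK' : K' ∈ E)
    (hP : ProjectiveInSub E P) (hP' : ProjectiveInSub E P') :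
    Nonempty (K ⊞ P' ≅ K' ⊞ P) := by
  obtain ⟨e⟩ := pullback_iso_biprod_of_projectiveInSub hE hS hK g' hP'
  obtain ⟨e'⟩ := pullback_iso_biprod_of_projectiveInSub hE hS' hK' g hP
  exact ⟨e.symm ≪≫ pullbackSymmetry g g' ≪≫ e'⟩

lemma FinProjResLen.of_iso (hE : IsClosedUnderRetracts E) :
    ∀ {n : ℕ} {M M' : A}, (M ≅ M') → FinProjResLen E n M → FinProjResLen E n M'
  | 0, _, _, e, h => ProjectiveInSub.of_iso hE e h
  | _ + 1, _, _, e, ⟨P, K, f, g, w, hP, hK, hS, h⟩ =>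
    ⟨P, K, f, g ≫ e.hom, by simp [reassoc_of% w], hP, hK,
      ShortComplex.shortExact_of_iso
        (ShortComplex.isoMk (S₁ := .mk f g w) (Iso.refl _) (Iso.refl _) e) hS, h⟩

lemma FinProjResLen.biprod (hE : IsClosedUnderBiprods E) {Q : A} (hQ : ProjectiveInSub E Q) :
    ∀ {n : ℕ} {M : A}, FinProjResLen E n M → FinProjResLen E n (M ⊞ Q)
  | 0, _, h => ProjectiveInSub.biprod hE h hQ
  | _ + 1, _, ⟨P, K, f, g, _, hP, hK, hS, h⟩ =>
    ⟨P ⊞ Q, K, f ≫ biprod.inl, biprod.map g (𝟙 Q), _, hP.biprod hE hQ, hK, hS.biprod_right Q, h⟩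

lemma FinProjResLen.exists_biprod_of_shortExact (hext : IsClosedUnderExtensions E)
    (hadd : IsClosedUnderBiprods E) (hsummand : IsClosedUnderRetracts E) {K P M Q : A}
    {f : K ⟶ P} {g : P ⟶ M} {w : f ≫ g = 0} (hS : (ShortComplex.mk f g w).ShortExact)
    (hK : K ∈ E) (hP : ProjectiveInSub E P) (hQ : ProjectiveInSub E Q) {n : ℕ}
    (h : FinProjResLen E (n + 1) (M ⊞ Q)) :
    ∃ Q', ProjectiveInSub E Q' ∧ FinProjResLen E n (K ⊞ Q') := by
  obtain ⟨P', K', f', g', w', hP', hK', hS', h'⟩ := h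
  have hPQ := hP.biprod hadd hQ
  obtain ⟨e⟩ := schanuel hext (hS.biprod_right Q) hS' hK hK' hPQ hP'
  exact ⟨P', hP', (h'.biprod hadd hPQ).of_iso hsummand e.symm⟩

end ExactSubcategory

namespace HomologicalComplex

lemma exists_retract_homotopyEquiv_of_idempotent {C : Type*} [Category C] [Preadditive C]
    {ι : Type*} {c : ComplexShape ι} [IsIdempotentComplete (HomologicalComplex C c)]
    {X : HomologicalComplex C c} (e : X ⟶ X) (he : e ≫ e = e) (h : Homotopy e (𝟙 X)) :
    ∃ (Q : HomologicalComplex C c) (ρ : Retract Q X),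
      ρ.r ≫ ρ.i = e ∧ Nonempty (HomotopyEquiv X Q) := by
  obtain ⟨Q, i, p, hip, hpi⟩ := IsIdempotentComplete.idempotents_split X e he
  exact ⟨Q, ⟨i, p, hip⟩, hpi,
    ⟨{ hom := p
       inv := i
       homotopyHomInvId := (Homotopy.ofEq hpi).trans h
       homotopyInvHomId := Homotopy.ofEq hip }⟩⟩

variable {C : Type*} [Category C] [Abelian C] {ι : Type*} {c : ComplexShape ι}
  (X : HomologicalComplex C c)

lemma iCycles_toCycles (i j : ι) : X.iCycles i ≫ X.toCycles i j = 0 := by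
  simp [← cancel_mono (X.iCycles j)]

lemma shortExact_cycles_s8 {i j : ι} (hij : c.Rel i j) (hj : X.ExactAt j) :
    (ShortComplex.mk (X.iCycles i) (X.toCycles i j) (X.iCycles_toCycles i j)).ShortExact := by
  have : Epi (X.toCycles i j) := by
    obtain rfl := c.prev_eq' hij
    exact hj.epi_toCycles
  refine .mk' (ShortComplex.exact_of_f_is_kernel _ ?_) inferInstance this
  exact isKernelOfComp (X.iCycles j) _ (X.cyclesIsKernel i j (c.next_eq' hij)) _
    (X.toCycles_i i j)

end HomologicalComplex

namespace ChainComplex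

variable {C : Type*} [Category C] [Abelian C]

section TailProjector

variable (X : ChainComplex C ℤ) (m : ℤ) (r : ∀ i, X.X i ⟶ X.cycles i)
  (s : ∀ i j, X.cycles i ⟶ X.X j)

noncomputable def tailHomotopy (i j : ℤ) (_ : (ComplexShape.down ℤ).Rel j i) : X.X i ⟶ X.X j :=
  if m < i then r i ≫ s i j else 0

noncomputable def tailProjector : X ⟶ X :=
  𝟙 X - Homotopy.nullHomotopicMap' (tailHomotopy X m r s)

variable {X m r s}
  (hs : ∀ i j, i + 1 = j → m ≤ i → s i j ≫ X.toCycles j i = 𝟙 _)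
  (hrs : ∀ i j, i + 1 = j → m ≤ i → r j ≫ X.iCycles j + X.toCycles j i ≫ s i j = 𝟙 _)

include hrs in
lemma iCycles_comp_eq_id {j : ℤ} (hj : m < j) : X.iCycles j ≫ r j = 𝟙 _ := by
  obtain ⟨i, rfl⟩ : ∃ i, j = i + 1 := ⟨j - 1, by ring⟩
  rw [← cancel_mono (X.iCycles _), assoc, id_comp]
  simpa [reassoc_of% (X.iCycles_toCycles (i + 1) i)] using
    X.iCycles (i + 1) ≫= hrs i (i + 1) rfl (by omega)

lemma tailProjector_f (j : ℤ) :
    (tailProjector X m r s).f (j + 1) =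
      𝟙 _ - (X.d (j + 1) j ≫ tailHomotopy X m r s j (j + 1) rfl +
        tailHomotopy X m r s (j + 1) (j + 1 + 1) rfl ≫ X.d (j + 1 + 1) (j + 1)) := by
  rw [tailProjector, HomologicalComplex.sub_f_apply, HomologicalComplex.id_f,
    Homotopy.nullHomotopicMap'_f rfl rfl]

lemma tailProjector_f_of_le {k : ℤ} (hk : k ≤ m) : (tailProjector X m r s).f k = 𝟙 _ := by
  obtain ⟨j, rfl⟩ : ∃ j, k = j + 1 := ⟨k - 1, by ring⟩
  simp [tailProjector_f, tailHomotopy, show ¬ m < j by omega, show ¬ m < j + 1 by omega]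

include hs hrs in
lemma tailProjector_f_succ :
    (tailProjector X m r s).f (m + 1) = X.toCycles (m + 1) m ≫ s m (m + 1) := by
  have hd : s (m + 1) (m + 1 + 1) ≫ X.d (m + 1 + 1) (m + 1) = X.iCycles (m + 1) := by
    rw [← X.toCycles_i, reassoc_of% hs (m + 1) _ rfl (by omega)]
  simp only [tailProjector_f, tailHomotopy]
  rw [if_neg (lt_irrefl m), if_pos (by omega), comp_zero, zero_add, assoc, hd,
    ← hrs m (m + 1) rfl le_rfl, add_sub_cancel_left]

include hs hrs in
lemma tailProjector_f_of_lt {k : ℤ} (hk : m + 1 < k) : (tailProjector X m r s).f k = 0 := by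
  obtain ⟨j, rfl⟩ : ∃ j, k = j + 1 := ⟨k - 1, by ring⟩
  have hd : s (j + 1) (j + 1 + 1) ≫ X.d (j + 1 + 1) (j + 1) = X.iCycles (j + 1) := by
    rw [← X.toCycles_i, reassoc_of% hs (j + 1) _ rfl (by omega)]
  simp only [tailProjector_f, tailHomotopy]
  rw [if_pos (by omega), if_pos (by omega), assoc, hd,
    ← X.toCycles_i_assoc, reassoc_of% (iCycles_comp_eq_id hrs (show m < j by omega)),
    ← hrs j (j + 1) rfl (by omega)]
  abel

include hs hrs in
lemma tailProjector_idem :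
    tailProjector X m r s ≫ tailProjector X m r s = tailProjector X m r s := by
  ext k
  rw [HomologicalComplex.comp_f]
  rcases lt_trichotomy k (m + 1) with hk | rfl | hk
  · rw [tailProjector_f_of_le (by omega), id_comp]
  · rw [tailProjector_f_succ hs hrs, assoc, reassoc_of% (hs m (m + 1) rfl le_rfl)]
  · rw [tailProjector_f_of_lt hs hrs hk, zero_comp]

noncomputable def tailProjectorHomotopy : Homotopy (tailProjector X m r s) (𝟙 X) :=
  (Homotopy.equivSubZero.symm ((Homotopy.ofEq (sub_sub_cancel _ _)).trans
    (Homotopy.nullHomotopy' _))).symm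

end TailProjector

theorem exists_idempotent_homotopy_id_of_splitting (X : ChainComplex C ℤ) (m : ℤ)
    (hsplit : ∀ i j, i + 1 = j → m ≤ i → Nonempty
      (ShortComplex.mk (X.iCycles j) (X.toCycles j i) (X.iCycles_toCycles j i)).Splitting) :
    ∃ e : X ⟶ X, e ≫ e = e ∧ Nonempty (Homotopy e (𝟙 X)) ∧ ∀ k, m + 1 < k → e.f k = 0 := by
  let σ i j hij hi := (hsplit i j hij hi).some
  let r j : X.X j ⟶ X.cycles j := if h : m ≤ j - 1 then (σ (j - 1) j (by omega) h).r else 0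
  let s i j : X.cycles i ⟶ X.X j := if h : i + 1 = j ∧ m ≤ i then (σ i j h.1 h.2).s else 0
  have hs : ∀ i j, i + 1 = j → m ≤ i → s i j ≫ X.toCycles j i = 𝟙 _ := by
    intro i j hij hi
    simpa [s, hij, hi] using (σ i j hij hi).s_g
  have hrs : ∀ i j, i + 1 = j → m ≤ i → r j ≫ X.iCycles j + X.toCycles j i ≫ s i j = 𝟙 _ := by
    intro i j hij hi
    obtain rfl : i = j - 1 := by omega
    simpa [r, s, hi, show m < j by omega] using (σ (j - 1) j hij hi).id
  exact ⟨tailProjector X m r s, tailProjector_idem hs hrs, ⟨tailProjectorHomotopy⟩,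
    fun k hk => tailProjector_f_of_lt hs hrs hk⟩

end ChainComplex

section EventuallyAcyclic

variable {A : Type u} [Category.{v} A] [Abelian A] {E : Set A} {X : ChainComplex A ℤ} {N : ℤ}

lemma nonempty_splitting_cycles (hX : ∀ n, ProjectiveInSub E (X.X n))
    (hN : ∀ n ≥ N, X.ExactAt n ∧ X.cycles n ∈ E) {i j : ℤ} (hij : i + 1 = j) (hi : N ≤ i)
    (hZ : ProjectiveInSub E (X.cycles i)) :
    Nonempty (ShortComplex.mk (X.iCycles j) (X.toCycles j i) (X.iCycles_toCycles j i)).Splitting :=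
  (X.shortExact_cycles_s8 hij (hN i hi).1).nonempty_splitting_of_projectiveInSub
    (hN j (by omega)).2 (hX j).1 hZ

lemma projectiveInSub_cycles_of_le (hsummand : IsClosedUnderRetracts E)
    (hX : ∀ n, ProjectiveInSub E (X.X n)) (hN : ∀ n ≥ N, X.ExactAt n ∧ X.cycles n ∈ E) {m : ℤ}
    (hm : N ≤ m) (hZ : ProjectiveInSub E (X.cycles m)) {n : ℤ} (hn : m ≤ n) :
    ProjectiveInSub E (X.cycles n) := by
  induction n, hn using Int.leInduction with
  | base => exact hZ
  | succ n hmn ih =>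
    exact (X.shortExact_cycles_s8 rfl (hN n (hm.trans hmn)).1).projectiveInSub_X₁ hsummand
      (hN (n + 1) (by omega)).2 (hX (n + 1)) ih

lemma exists_projectiveInSub_cycles (hext : IsClosedUnderExtensions E)
    (hadd : IsClosedUnderBiprods E) (hsummand : IsClosedUnderRetracts E)
    (hX : ∀ n, ProjectiveInSub E (X.X n)) (hN : ∀ n ≥ N, X.ExactAt n ∧ X.cycles n ∈ E) {d : ℕ}
    (hd : FinProjResLen E d (X.cycles N)) : ∃ m ≥ N, ProjectiveInSub E (X.cycles m) := by
  suffices ∀ (d : ℕ) (n : ℤ), N ≤ n → ∀ Q, ProjectiveInSub E Q →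
      FinProjResLen E d (X.cycles n ⊞ Q) → ∃ m ≥ N, ProjectiveInSub E (X.cycles m) from
    this d N le_rfl _ (hX N) (hd.biprod hadd (hX N))
  intro d
  induction d with
  | zero =>
    exact fun n hn Q _ h => ⟨n, hn, h.of_retract hsummand ⟨biprod.inl, biprod.fst, by simp⟩⟩
  | succ d ih =>
    intro n hn Q hQ h
    obtain ⟨Q', hQ', h'⟩ := h.exists_biprod_of_shortExact hext hadd hsummand
      (X.shortExact_cycles_s8 rfl (hN n hn).1) (hN (n + 1) (by omega)).2 (hX (n + 1)) hQ
    exact ih (n + 1) (by omega) Q' hQ' h'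

end EventuallyAcyclic

theorem stmt8_general {A : Type u} [Category.{v} A] [Abelian A] (E : Set A)
    (hadd : ∀ X Y : A, X ∈ E → Y ∈ E → (X ⊞ Y) ∈ E)
    (hext : ∀ (X' X X'' : A) (f : X' ⟶ X) (g : X ⟶ X'') (w : f ≫ g = 0),
      (ShortComplex.mk f g w).ShortExact → X' ∈ E → X'' ∈ E → X ∈ E)
    (hsummand : ∀ (X Y : A) (i : X ⟶ Y) (r : Y ⟶ X), i ≫ r = 𝟙 X → Y ∈ E → X ∈ E)
    (hfin : ∀ M ∈ E, ∃ n : ℕ, FinProjResLen E n M)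
    (X : ChainComplex A ℤ)
    (hbb : ∃ b : ℤ, ∀ n < b, IsZero (X.X n))
    (hprj : ∀ n, ProjectiveInSub E (X.X n))
    (heac : ∃ N : ℤ, ∀ n ≥ N, X.ExactAt n ∧ X.cycles n ∈ E) :
    ∃ Q : ChainComplex A ℤ,
      (∀ n, ProjectiveInSub E (Q.X n)) ∧
      (∃ a b : ℤ, ∀ n, (n < a ∨ b < n) → IsZero (Q.X n)) ∧
      Nonempty (HomotopyEquiv X Q) := by
  have hext' : IsClosedUnderExtensions E := fun S hS => hext _ _ _ S.f S.g S.zero hS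
  have hsummand' : IsClosedUnderRetracts E := fun X Y h => hsummand X Y h.i h.r h.retract
  obtain ⟨b, hb⟩ := hbb
  obtain ⟨N, hN⟩ := heac
  obtain ⟨d, hd⟩ := hfin _ (hN N le_rfl).2
  obtain ⟨m, hmN, hm⟩ := exists_projectiveInSub_cycles hext' hadd hsummand' hprj hN hd
  obtain ⟨e, he, ⟨h⟩, he0⟩ := X.exists_idempotent_homotopy_id_of_splitting m
    fun i j hij hi => nonempty_splitting_cycles hprj hN hij (hmN.trans hi)
      (projectiveInSub_cycles_of_le hsummand' hprj hN hmN hm hi)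
  obtain ⟨Q, ρ, hρ, hXQ⟩ := HomologicalComplex.exists_retract_homotopyEquiv_of_idempotent e he h
  let ρ' n : Retract (Q.X n) (X.X n) := ρ.map (HomologicalComplex.eval A _ n)
  refine ⟨Q, fun n => (hprj n).of_retract hsummand' (ρ' n), ⟨b, m + 1, fun n hn => ?_⟩, hXQ⟩
  refine (ρ' n).isZero_of_r_i_eq_zero ?_
  rcases hn with hn | hn
  · exact (hb n hn).eq_of_src _ _
  · simpa [ρ', ← HomologicalComplex.comp_f, hρ] using he0 n hn

/-- Let `E` be a full additive subcategory of an abelian category, closed under extensions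
and direct summands, with enough projectives.  If every object of `E` has a finite
resolution by projectives of `E`, then every bounded-below, eventually `E`-acyclic complex
of projectives of `E` is homotopy equivalent to a bounded complex of projectives of `E`. -/
theorem stmt8 {A : Type u} [Category.{v} A] [Abelian A] (E : Set A)
    (hzero : ∀ Z : A, IsZero Z → Z ∈ E)
    (hadd : ∀ X Y : A, X ∈ E → Y ∈ E → (X ⊞ Y) ∈ E)
    (hext : ∀ (X' X X'' : A) (f : X' ⟶ X) (g : X ⟶ X'') (w : f ≫ g = 0),
      (ShortComplex.mk f g w).ShortExact → X' ∈ E → X'' ∈ E → X ∈ E)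
    (hsummand : ∀ (X Y : A) (i : X ⟶ Y) (r : Y ⟶ X), i ≫ r = 𝟙 X → Y ∈ E → X ∈ E)
    (henough : ∀ M ∈ E, ∃ (P K : A) (f : K ⟶ P) (g : P ⟶ M) (w : f ≫ g = 0),
      ProjectiveInSub E P ∧ K ∈ E ∧ (ShortComplex.mk f g w).ShortExact)
    (hfin : ∀ M ∈ E, ∃ n : ℕ, FinProjResLen E n M)
    (X : ChainComplex A ℤ)
    (hbb : ∃ b : ℤ, ∀ n < b, IsZero (X.X n))
    (hprj : ∀ n, ProjectiveInSub E (X.X n))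
    (heac : ∃ N : ℤ, ∀ n ≥ N, X.ExactAt n ∧ X.cycles n ∈ E) :
    ∃ Q : ChainComplex A ℤ,
      (∀ n, ProjectiveInSub E (Q.X n)) ∧
      (∃ a b : ℤ, ∀ n, (n < a ∨ b < n) → IsZero (Q.X n)) ∧
      Nonempty (HomotopyEquiv X Q) :=
  stmt8_general E hadd hext hsummand hfin X hbb hprj heac
end
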